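/- arXiv:math/0009100 — 3 statements merged into one kernel-verified Lean document; each statement's English description precedes it below -/
import Mathlib

section
/- Let G be a compatible locally trivial groupoid on a topological space X, equipped with the topology whose basic open neighbourhoods of a ∈ G(x,y) are the sets (Ũ_{x,i})⁻¹ a (Ũ_{y,j}). Then the difference map δ : G ×_α G → G, (a,b) ↦ a⁻¹b, is continuous; indeed, for a ∈ G(x,y), b ∈ G(x,z), δ maps the basic neighbourhood ((Ũ_{x,i})⁻¹ a (Ũ_{y,j})) ×_α ((Ũ_{x,i})⁻¹ b (Ũ_{z,k})) of (a,b) onto (Ũ_{y,j})⁻¹ a⁻¹ b (Ũ_{z,k}). -/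
universe u v w u₁ v₁ u₂ v₂

/-- A groupoid with set of morphisms `G` and set of objects `X`: a small category in which
every morphism is invertible, presented with a total multiplication map which is only
required to satisfy the groupoid laws on composable pairs. -/
structure GroupoidOn (G : Type u) (X : Type v) where
  /-- initial (source) point map `α` -/
  src : G → X
  /-- final (target) point map `β` -/
  tgt : G → X
  /-- object inclusion `ε`, sending an object to its identity -/
  e : X → G
  /-- partial multiplication (meaningful when `tgt a = src b`) -/
  mul : G → G → G
  /-- inversion -/
  inv : G → G
  src_e : ∀ x, src (e x) = x
  tgt_e : ∀ x, tgt (e x) = x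
  src_mul : ∀ a b, tgt a = src b → src (mul a b) = src a
  tgt_mul : ∀ a b, tgt a = src b → tgt (mul a b) = tgt b
  mul_assoc : ∀ a b c, tgt a = src b → tgt b = src c →
    mul (mul a b) c = mul a (mul b c)
  e_mul : ∀ a, mul (e (src a)) a = a
  mul_e : ∀ a, mul a (e (tgt a)) = a
  src_inv : ∀ a, src (inv a) = tgt a
  tgt_inv : ∀ a, tgt (inv a) = src a
  mul_inv : ∀ a, mul a (inv a) = e (src a)
  inv_mul : ∀ a, mul (inv a) a = e (tgt a)

namespace GroupoidOn

variable {G : Type u} {X : Type v}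

/-- The set of identities `O_G` of the groupoid, viewed inside `G`. -/
def objSet (𝒢 : GroupoidOn G X) : Set G := Set.range 𝒢.e

/-- The star `G_x = {a : α a = x}` at an object `x`. -/
def star (𝒢 : GroupoidOn G X) (x : X) : Set G := {a | 𝒢.src a = x}

/-- the set `G(x,y)` of morphisms from `x` to `y` -/
def hom (𝒢 : GroupoidOn G X) (x y : X) : Set G := {a | 𝒢.src a = x ∧ 𝒢.tgt a = y}

/-- `W⁻¹` -/
def invSet (𝒢 : GroupoidOn G X) (W : Set G) : Set G := 𝒢.inv '' W

/-- `W²`, the set of products of two composable elements of `W` -/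
def sq (𝒢 : GroupoidOn G X) (W : Set G) : Set G :=
  {c | ∃ a ∈ W, ∃ b ∈ W, 𝒢.tgt a = 𝒢.src b ∧ c = 𝒢.mul a b}

/-- the elements of `G` expressible as finite products of elements of `W` -/
inductive IsGen (𝒢 : GroupoidOn G X) (W : Set G) : G → Prop
  | base {a : G} : a ∈ W → IsGen 𝒢 W a
  | mul {a b : G} : IsGen 𝒢 W a → IsGen 𝒢 W b → 𝒢.tgt a = 𝒢.src b → IsGen 𝒢 W (𝒢.mul a b)

/-- `W` generates the groupoid: every element is a finite product of elements of `W`. -/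
def Generates (𝒢 : GroupoidOn G X) (W : Set G) : Prop := ∀ g : G, 𝒢.IsGen W g

/-- a wide subgroupoid: contains all identities, closed under inversion and multiplication. -/
structure IsWideSubgroupoid (𝒢 : GroupoidOn G X) (W : Set G) : Prop where
  e_mem : ∀ x, 𝒢.e x ∈ W
  inv_mem : ∀ a ∈ W, 𝒢.inv a ∈ W
  mul_mem : ∀ a ∈ W, ∀ b ∈ W, 𝒢.tgt a = 𝒢.src b → 𝒢.mul a b ∈ W

end GroupoidOn

/-- a morphism of groupoids (a functor): `f` on morphisms, `fo` on objects. -/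
structure IsGrpdHom {G : Type u} {X : Type v} {H : Type u₁} {Y : Type v₁}
    (𝒢 : GroupoidOn G X) (ℋ : GroupoidOn H Y) (f : G → H) (fo : X → Y) : Prop where
  src : ∀ a, ℋ.src (f a) = fo (𝒢.src a)
  tgt : ∀ a, ℋ.tgt (f a) = fo (𝒢.tgt a)
  e : ∀ x, f (𝒢.e x) = ℋ.e (fo x)
  mul : ∀ a b, 𝒢.tgt a = 𝒢.src b → f (𝒢.mul a b) = ℋ.mul (f a) (f b)

/-- a pregroupoid morphism defined on a subset `W ⊆ G` containing the identities:
preserves sources, targets, identities, and products which are defined and stay in `W`. -/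
structure IsPreGrpdHom {G : Type u} {X : Type v} {H : Type u₁} {Y : Type v₁}
    (𝒢 : GroupoidOn G X) (W : Set G) (ℋ : GroupoidOn H Y) (f : G → H) (fo : X → Y) : Prop where
  src : ∀ a ∈ W, ℋ.src (f a) = fo (𝒢.src a)
  tgt : ∀ a ∈ W, ℋ.tgt (f a) = fo (𝒢.tgt a)
  e : ∀ x, f (𝒢.e x) = ℋ.e (fo x)
  mul : ∀ a ∈ W, ∀ b ∈ W, 𝒢.tgt a = 𝒢.src b → 𝒢.mul a b ∈ W →
    f (𝒢.mul a b) = ℋ.mul (f a) (f b)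

/-- a topological groupoid: all structure maps are continuous (multiplication on the
pullback `{(a,b) : β a = α b}` with the subspace topology). -/
structure IsTopGroupoid {G : Type u} {X : Type v} [TopologicalSpace G] [TopologicalSpace X]
    (𝒢 : GroupoidOn G X) : Prop where
  cont_src : Continuous 𝒢.src
  cont_tgt : Continuous 𝒢.tgt
  cont_e : Continuous 𝒢.e
  cont_inv : Continuous 𝒢.inv
  cont_mul : Continuous fun p : {p : G × G // 𝒢.tgt p.1 = 𝒢.src p.2} => 𝒢.mul p.1.1 p.1.2

/-- `𝒢` is a topological groupoid for the explicitly given topology `τG` on `G`. -/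
def TopGroupoidWith {G : Type u} {X : Type v} [TopologicalSpace X] (𝒢 : GroupoidOn G X)
    (τG : TopologicalSpace G) : Prop :=
  @IsTopGroupoid G X τG _ 𝒢

/-- the subspace topology on a subset, for an explicitly given topology. -/
def subTop {A : Type u} (τ : TopologicalSpace A) (S : Set A) : TopologicalSpace ↥S :=
  TopologicalSpace.induced Subtype.val τ

/-- continuity of the groupoid difference map `δ(a,b) = a⁻¹ b` on the pullback
`G ×_α G`, for an explicitly given topology on `G`. -/
def DeltaContinuousWith {G : Type u} {X : Type v} (𝒢 : GroupoidOn G X)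
    (τG : TopologicalSpace G) : Prop := by
  letI := τG
  exact Continuous fun p : {p : G × G // 𝒢.src p.1 = 𝒢.src p.2} => 𝒢.mul (𝒢.inv p.1.1) p.1.2

/-- `f` maps `S` homeomorphically onto `T` (for explicitly given topologies). -/
def MapsHomeomorphicallyWith {A : Type u} {B : Type u₁} (τA : TopologicalSpace A)
    (τB : TopologicalSpace B) (S : Set A) (T : Set B) (f : A → B) : Prop :=
  ∃ h : @Homeomorph ↥S ↥T (subTop τA S) (subTop τB T), ∀ a : ↥S, ((h a : ↥T) : B) = f (a : A)

namespace GroupoidOn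

variable {G : Type u} {X : Type v}

/-- There is a continuous admissible local section through `g` with values in `W`
(`W` carrying the explicitly given topology `τW`). -/
def HasSectionThrough [TopologicalSpace X] (𝒢 : GroupoidOn G X) (W : Set G)
    (τW : TopologicalSpace ↥W) (g : G) : Prop := by
  letI := τW
  exact ∃ (U : Set X) (s : X → G), IsOpen U ∧ 𝒢.src g ∈ U ∧ s (𝒢.src g) = g ∧
    (∀ x ∈ U, 𝒢.src (s x) = x) ∧
    IsOpen ((fun x => 𝒢.tgt (s x)) '' U) ∧
    Set.InjOn (fun x => 𝒢.tgt (s x)) U ∧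
    ContinuousOn (fun x => 𝒢.tgt (s x)) U ∧
    (∀ V ⊆ U, IsOpen V → IsOpen ((fun x => 𝒢.tgt (s x)) '' V)) ∧
    ∃ hsW : ∀ x ∈ U, s x ∈ W,
      Continuous fun x : ↥U => (⟨s x.1, hsW x.1 x.2⟩ : ↥W)

/-- `(α, β, W)` is locally sectionable. -/
def LocallySectionableOn [TopologicalSpace X] (𝒢 : GroupoidOn G X) (W : Set G)
    (τW : TopologicalSpace ↥W) : Prop :=
  ∀ g ∈ W, 𝒢.HasSectionThrough W τW g

/-- a locally sectionable topological groupoid: through every element there is a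
continuous admissible local section. -/
def LocallySectionable [TopologicalSpace G] [TopologicalSpace X] (𝒢 : GroupoidOn G X) : Prop :=
  ∀ g : G, ∃ (U : Set X) (s : X → G), IsOpen U ∧ 𝒢.src g ∈ U ∧ s (𝒢.src g) = g ∧
    (∀ x ∈ U, 𝒢.src (s x) = x) ∧
    IsOpen ((fun x => 𝒢.tgt (s x)) '' U) ∧
    Set.InjOn (fun x => 𝒢.tgt (s x)) U ∧
    ContinuousOn (fun x => 𝒢.tgt (s x)) U ∧
    (∀ V ⊆ U, IsOpen V → IsOpen ((fun x => 𝒢.tgt (s x)) '' V)) ∧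
    ContinuousOn s U

/-- a locally trivial groupoid on a topological space: every point has an open
neighbourhood `U` with a section `s : U → G_x` of `β`. -/
def LocallyTrivial [TopologicalSpace X] (𝒢 : GroupoidOn G X) : Prop :=
  ∀ x : X, ∃ (U : Set X) (s : X → G), IsOpen U ∧ x ∈ U ∧
    ∀ y ∈ U, 𝒢.tgt (s y) = y ∧ 𝒢.src (s y) = x

end GroupoidOn

/-- a locally topological groupoid `(G, W)` in the sense of Pradines: `W` is a topological
space containing the identities with `W = W⁻¹`, the difference map is continuous where defined
on `W`, source and target are continuous on `W`, `(α, β, W)` is locally sectionable and `W`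
generates `G`. -/
def IsLocTopGroupoid {G : Type u} {X : Type v} [TopologicalSpace X] (𝒢 : GroupoidOn G X)
    (W : Set G) (τW : TopologicalSpace ↥W) : Prop := by
  letI := τW
  exact
    (∀ x, 𝒢.e x ∈ W) ∧
    (𝒢.invSet W = W) ∧
    (IsOpen {q : {q : ↥W × ↥W // 𝒢.src (q.1 : G) = 𝒢.src (q.2 : G)} |
        𝒢.mul (𝒢.inv (q.1.1 : G)) (q.1.2 : G) ∈ W} ∧
      Continuous fun q : ↥{q : {q : ↥W × ↥W // 𝒢.src (q.1 : G) = 𝒢.src (q.2 : G)} |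
          𝒢.mul (𝒢.inv (q.1.1 : G)) (q.1.2 : G) ∈ W} =>
        (⟨𝒢.mul (𝒢.inv (q.1.1.1 : G)) (q.1.1.2 : G), q.2⟩ : ↥W)) ∧
    (Continuous fun a : ↥W => 𝒢.src (a : G)) ∧
    (Continuous fun a : ↥W => 𝒢.tgt (a : G)) ∧
    𝒢.LocallySectionableOn W τW ∧
    𝒢.Generates W

/-- monodromy groupoid data for `(G, W)`: a groupoid `M` on the same object set together
with an injection `ι : W → M` which is a pregroupoid morphism over the identity on objects,
whose image generates `M`, and which is universal among pregroupoid morphisms on `W`. -/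
structure IsMonodromy {G : Type u} {X : Type v} {M : Type u₁} (𝒢 : GroupoidOn G X) (W : Set G)
    (𝓜 : GroupoidOn M X) (ι : G → M) : Prop where
  pre : IsPreGrpdHom 𝒢 W 𝓜 ι id
  injOn : Set.InjOn ι W
  generates : 𝓜.Generates (ι '' W)
  univ : ∀ {H : Type u₂} {Y : Type v₂} (ℋ : GroupoidOn H Y) (f : G → H) (fo : X → Y),
    IsPreGrpdHom 𝒢 W ℋ f fo →
    ∃ f' : M → H, IsGrpdHom 𝓜 ℋ f' fo ∧ (∀ a ∈ W, f' (ι a) = f a) ∧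
      ∀ g' : M → H, IsGrpdHom 𝓜 ℋ g' fo → (∀ a ∈ W, g' (ι a) = f a) → g' = f'

/-- a subset `U` of a space is liftable: open, path-connected, and the inclusion maps each
fundamental group of `U` trivially. -/
def Liftable {Y : Type u} [TopologicalSpace Y] (U : Set Y) : Prop :=
  IsOpen U ∧ IsPathConnected U ∧
  ∀ (y : Y) (hy : y ∈ U) (γ : Path (⟨y, hy⟩ : ↥U) ⟨y, hy⟩),
    (γ.map continuous_subtype_val).Homotopic (Path.refl y)

/-- the space `Y` admits a (simply connected) universal covering. -/
def HasUniversalCover (Y : Type u) [TopologicalSpace Y] : Prop :=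
  ∃ (E : Type u) (τE : TopologicalSpace E) (q : E → Y),
    @IsCoveringMap E Y τE _ q ∧ @SimplyConnectedSpace E τE

/-- a star topological groupoid: each star carries a topology and all (left) translations
between stars are homeomorphisms. -/
def IsStarTopGroupoid {G : Type u} {X : Type v} (𝒢 : GroupoidOn G X)
    (τ : ∀ x, TopologicalSpace ↥(𝒢.star x)) : Prop :=
  ∀ a : G, ∃ h : @Homeomorph ↥(𝒢.star (𝒢.tgt a)) ↥(𝒢.star (𝒢.src a)) (τ _) (τ _),
    ∀ b : ↥(𝒢.star (𝒢.tgt a)), ((h b : ↥(𝒢.star (𝒢.src a))) : G) = 𝒢.mul a (b : G)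

/-- `p : M → G` is, on each star, a universal covering map (with respect to the given
star topologies): the restriction `M_x → G_x` is a covering map with simply connected domain. -/
def StarUniversalCoveringMap {M : Type u₁} {G : Type u} {X : Type v}
    (𝓜 : GroupoidOn M X) (𝒢 : GroupoidOn G X)
    (τM : ∀ x, TopologicalSpace ↥(𝓜.star x)) (τG : ∀ x, TopologicalSpace ↥(𝒢.star x))
    (p : M → G) : Prop :=
  ∀ x : X, ∃ hx : ∀ m : ↥(𝓜.star x), p (m : M) ∈ 𝒢.star x,
    @IsCoveringMap ↥(𝓜.star x) ↥(𝒢.star x) (τM x) (τG x) (fun m => ⟨p (m : M), hx m⟩) ∧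
    @SimplyConnectedSpace ↥(𝓜.star x) (τM x)

/-- an isomorphism of star topological groupoids over the identity on objects. -/
def IsStarTopIso {M : Type u₁} {P : Type u₂} {X : Type v}
    (𝓜 : GroupoidOn M X) (𝒬 : GroupoidOn P X)
    (τM : ∀ x, TopologicalSpace ↥(𝓜.star x)) (τP : ∀ x, TopologicalSpace ↥(𝒬.star x))
    (φ : M → P) : Prop :=
  IsGrpdHom 𝓜 𝒬 φ id ∧ Function.Bijective φ ∧
  ∀ x, ∃ h : @Homeomorph ↥(𝓜.star x) ↥(𝒬.star x) (τM x) (τP x),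
    ∀ m : ↥(𝓜.star x), ((h m : ↥(𝒬.star x)) : P) = φ (m : M)

/-- an atlas `(U i, s i)` exhibiting a groupoid as compatible locally trivial: the `U i`
form an open cover of `X` which is a base for its topology, each `s i x hx : U i → G_x` is a
local section of `β` through the identity at `x`, and any two local sections about `x` agree
on some basic open set containing `x`. -/
structure IsCompatLocTriv {G : Type u} {X : Type v} {ι : Type w} [TopologicalSpace X]
    (𝒢 : GroupoidOn G X) (U : ι → Set X) (s : ∀ i, ∀ x ∈ U i, X → G) : Prop where
  isOpen : ∀ i, IsOpen (U i)
  covers : ∀ x : X, ∃ i, x ∈ U i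
  isBasis : TopologicalSpace.IsTopologicalBasis (Set.range U)
  sec_tgt : ∀ i x (hx : x ∈ U i), ∀ y ∈ U i, 𝒢.tgt (s i x hx y) = y
  sec_src : ∀ i x (hx : x ∈ U i), ∀ y ∈ U i, 𝒢.src (s i x hx y) = x
  sec_id : ∀ i x (hx : x ∈ U i), s i x hx x = 𝒢.e x
  compat : ∀ x i j (hxi : x ∈ U i) (hxj : x ∈ U j), ∃ k, ∃ hxk : x ∈ U k,
    U k ⊆ U i ∩ U j ∧ ∀ y ∈ U k, s i x hxi y = s j x hxj y

/-- the basic set `(Ũ_{x,i})⁻¹ a (Ũ_{y,j})` associated with a compatible locally trivial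
atlas, where `Ũ_{x,i} = s i x hxi '' (U i)`. -/
def basicSet {G : Type u} {X : Type v} {ι : Type w} (𝒢 : GroupoidOn G X) {U : ι → Set X}
    (s : ∀ i, ∀ x ∈ U i, X → G) (i j : ι) {x y : X} (hxi : x ∈ U i) (hyj : y ∈ U j)
    (a : G) : Set G :=
  {g | ∃ z ∈ U i, ∃ w ∈ U j,
    g = 𝒢.mul (𝒢.mul (𝒢.inv (s i x hxi z)) a) (s j y hyj w)}

/-- the topology on `G` generated by the basic sets `(Ũ_{α a, i})⁻¹ a (Ũ_{β a, j})`. -/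
def cltTopology {G : Type u} {X : Type v} {ι : Type w} (𝒢 : GroupoidOn G X) {U : ι → Set X}
    (s : ∀ i, ∀ x ∈ U i, X → G) : TopologicalSpace G :=
  TopologicalSpace.generateFrom
    {B | ∃ (a : G) (i j : ι) (hxi : 𝒢.src a ∈ U i) (hyj : 𝒢.tgt a ∈ U j),
      B = basicSet 𝒢 s i j hxi hyj a}


section CLTAux

variable {G : Type u} {X : Type v} (𝒢 : GroupoidOn G X)

private lemma clt_inv_e (x : X) : 𝒢.inv (𝒢.e x) = 𝒢.e x := by
  have h1 := 𝒢.mul_inv (𝒢.e x)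
  rw [𝒢.src_e] at h1
  have h2 := 𝒢.e_mul (𝒢.inv (𝒢.e x))
  rw [𝒢.src_inv, 𝒢.tgt_e] at h2
  exact h2.symm.trans h1

private lemma clt_inv_inv (a : G) : 𝒢.inv (𝒢.inv a) = a := by
  have h1 : 𝒢.mul (𝒢.mul a (𝒢.inv a)) (𝒢.inv (𝒢.inv a)) =
      𝒢.mul a (𝒢.mul (𝒢.inv a) (𝒢.inv (𝒢.inv a))) :=
    𝒢.mul_assoc a (𝒢.inv a) (𝒢.inv (𝒢.inv a)) (𝒢.src_inv a).symm
      (𝒢.src_inv (𝒢.inv a)).symm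
  rw [𝒢.mul_inv, 𝒢.mul_inv, 𝒢.src_inv, 𝒢.mul_e] at h1
  have h2 := 𝒢.e_mul (𝒢.inv (𝒢.inv a))
  rw [𝒢.src_inv, 𝒢.tgt_inv] at h2
  exact h2.symm.trans h1

-- mul (mul A u) (inv u) = A  when tgt A = src u
private lemma clt_mul_mul_inv (A u : G) (h : 𝒢.tgt A = 𝒢.src u) :
    𝒢.mul (𝒢.mul A u) (𝒢.inv u) = A := by
  rw [𝒢.mul_assoc A u (𝒢.inv u) h (by rw [𝒢.src_inv]), 𝒢.mul_inv, ← h, 𝒢.mul_e]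

-- mul (mul A (inv u)) u = A  when tgt A = tgt u
private lemma clt_mul_inv_mul (A u : G) (h : 𝒢.tgt A = 𝒢.tgt u) :
    𝒢.mul (𝒢.mul A (𝒢.inv u)) u = A := by
  rw [𝒢.mul_assoc A (𝒢.inv u) u (by rw [𝒢.src_inv, h]) (by rw [𝒢.tgt_inv]),
    𝒢.inv_mul, ← h, 𝒢.mul_e]

-- mul u (mul (inv u) B) = B when src u = src B
private lemma clt_mul_inv_cancel_left (u B : G) (h : 𝒢.src u = 𝒢.src B) :
    𝒢.mul u (𝒢.mul (𝒢.inv u) B) = B := by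
  rw [← 𝒢.mul_assoc u (𝒢.inv u) B (by rw [𝒢.src_inv]) (by rw [𝒢.tgt_inv, h]),
    𝒢.mul_inv, h, 𝒢.e_mul]

private lemma clt_inv_mul_rev (A B : G) (h : 𝒢.tgt A = 𝒢.src B) :
    𝒢.inv (𝒢.mul A B) = 𝒢.mul (𝒢.inv B) (𝒢.inv A) := by
  have hC : 𝒢.mul (𝒢.mul A B) (𝒢.mul (𝒢.inv B) (𝒢.inv A)) = 𝒢.e (𝒢.src A) := by
    rw [𝒢.mul_assoc A B (𝒢.mul (𝒢.inv B) (𝒢.inv A)) h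
        (by rw [𝒢.src_mul _ _ (by rw [𝒢.src_inv, 𝒢.tgt_inv]; exact h.symm), 𝒢.src_inv]),
      ← 𝒢.mul_assoc B (𝒢.inv B) (𝒢.inv A) (by rw [𝒢.src_inv])
        (by rw [𝒢.tgt_inv, 𝒢.src_inv, h]),
      𝒢.mul_inv, ← h]
    -- mul A (mul (e (tgt A)) (inv A)) = e (src A)
    have : 𝒢.mul (𝒢.e (𝒢.tgt A)) (𝒢.inv A) = 𝒢.inv A := by
      have := 𝒢.e_mul (𝒢.inv A); rwa [𝒢.src_inv] at this
    rw [this, 𝒢.mul_inv]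
  -- inv (mul A B) = mul (inv (mul A B)) (mul A B) (mul (inv B) (inv A)) chain
  have hsrc : 𝒢.src (𝒢.mul A B) = 𝒢.src A := 𝒢.src_mul A B h
  have htgt : 𝒢.tgt (𝒢.mul A B) = 𝒢.tgt B := 𝒢.tgt_mul A B h
  calc 𝒢.inv (𝒢.mul A B)
      = 𝒢.mul (𝒢.inv (𝒢.mul A B)) (𝒢.e (𝒢.src A)) := by
        rw [← hsrc]
        have := 𝒢.mul_e (𝒢.inv (𝒢.mul A B)); rw [𝒢.tgt_inv] at this
        exact this.symm
    _ = 𝒢.mul (𝒢.inv (𝒢.mul A B)) (𝒢.mul (𝒢.mul A B) (𝒢.mul (𝒢.inv B) (𝒢.inv A))) := by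
        rw [hC]
    _ = 𝒢.mul (𝒢.mul (𝒢.inv (𝒢.mul A B)) (𝒢.mul A B)) (𝒢.mul (𝒢.inv B) (𝒢.inv A)) := by
        rw [← 𝒢.mul_assoc _ _ _ (by rw [𝒢.tgt_inv])
          (by rw [htgt, 𝒢.src_mul _ _ (by rw [𝒢.src_inv, 𝒢.tgt_inv]; exact h.symm), 𝒢.src_inv])]
    _ = 𝒢.mul (𝒢.inv B) (𝒢.inv A) := by
        rw [𝒢.inv_mul, htgt]
        have := 𝒢.e_mul (𝒢.mul (𝒢.inv B) (𝒢.inv A))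
        rwa [𝒢.src_mul _ _ (by rw [𝒢.src_inv, 𝒢.tgt_inv]; exact h.symm), 𝒢.src_inv] at this

private lemma clt_delta_calc (u A v B w : G)
    (h1 : 𝒢.src u = 𝒢.src A) (h2 : 𝒢.tgt A = 𝒢.src v)
    (h3 : 𝒢.src u = 𝒢.src B) (h4 : 𝒢.tgt B = 𝒢.src w) :
    𝒢.mul (𝒢.inv (𝒢.mul (𝒢.mul (𝒢.inv u) A) v)) (𝒢.mul (𝒢.mul (𝒢.inv u) B) w)
      = 𝒢.mul (𝒢.mul (𝒢.inv v) (𝒢.mul (𝒢.inv A) B)) w := by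
  have hiu : 𝒢.tgt (𝒢.inv u) = 𝒢.src A := by rw [𝒢.tgt_inv, h1]
  have hiu' : 𝒢.tgt (𝒢.inv u) = 𝒢.src B := by rw [𝒢.tgt_inv, h3]
  have huA_src : 𝒢.src (𝒢.mul (𝒢.inv u) A) = 𝒢.tgt u := by
    rw [𝒢.src_mul _ _ hiu, 𝒢.src_inv]
  have huA_tgt : 𝒢.tgt (𝒢.mul (𝒢.inv u) A) = 𝒢.tgt A := 𝒢.tgt_mul _ _ hiu
  rw [clt_inv_mul_rev 𝒢 (𝒢.mul (𝒢.inv u) A) v (by rw [huA_tgt, h2]),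
    clt_inv_mul_rev 𝒢 (𝒢.inv u) A hiu, clt_inv_inv]
  -- now: mul (mul (inv v) (mul (inv A) u)) (mul (mul (inv u) B) w) = ...
  have hAu_src : 𝒢.src (𝒢.mul (𝒢.inv A) u) = 𝒢.tgt A := by
    rw [𝒢.src_mul _ _ (by rw [𝒢.tgt_inv, h1]), 𝒢.src_inv]
  have hAu_tgt : 𝒢.tgt (𝒢.mul (𝒢.inv A) u) = 𝒢.tgt u := 𝒢.tgt_mul _ _ (by rw [𝒢.tgt_inv, h1])
  have huB_src : 𝒢.src (𝒢.mul (𝒢.inv u) B) = 𝒢.tgt u := by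
    rw [𝒢.src_mul _ _ hiu', 𝒢.src_inv]
  have huB_tgt : 𝒢.tgt (𝒢.mul (𝒢.inv u) B) = 𝒢.tgt B := 𝒢.tgt_mul _ _ hiu'
  have step : 𝒢.mul (𝒢.mul (𝒢.inv A) u) (𝒢.mul (𝒢.mul (𝒢.inv u) B) w)
      = 𝒢.mul (𝒢.mul (𝒢.inv A) B) w := by
    rw [𝒢.mul_assoc (𝒢.inv A) u _ (by rw [𝒢.tgt_inv, h1])
        (by rw [𝒢.src_mul _ _ (huB_tgt.trans h4), huB_src]),
      ← 𝒢.mul_assoc u (𝒢.mul (𝒢.inv u) B) w (huB_src.symm) (huB_tgt.trans h4),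
      clt_mul_inv_cancel_left 𝒢 u B h3,
      ← 𝒢.mul_assoc (𝒢.inv A) B w (by rw [𝒢.tgt_inv, ← h1, h3]) h4]
  rw [𝒢.mul_assoc (𝒢.inv v) (𝒢.mul (𝒢.inv A) u) _ (by rw [𝒢.tgt_inv, hAu_src, h2])
      (by rw [hAu_tgt, 𝒢.src_mul _ _ (huB_tgt.trans h4), huB_src]),
    step,
    ← 𝒢.mul_assoc (𝒢.inv v) (𝒢.mul (𝒢.inv A) B) w
      (by rw [𝒢.tgt_inv, 𝒢.src_mul _ _ (by rw [𝒢.tgt_inv, ← h1, h3]), 𝒢.src_inv]; exact h2.symm)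
      (by rw [𝒢.tgt_mul _ _ (by rw [𝒢.tgt_inv, ← h1, h3]), h4])]


private lemma clt_src_be (u A v : G) (h1 : 𝒢.src u = 𝒢.src A) (h2 : 𝒢.tgt A = 𝒢.src v) :
    𝒢.src (𝒢.mul (𝒢.mul (𝒢.inv u) A) v) = 𝒢.tgt u := by
  rw [𝒢.src_mul _ _ (by rw [𝒢.tgt_mul _ _ (by rw [𝒢.tgt_inv, h1]), h2]),
    𝒢.src_mul _ _ (by rw [𝒢.tgt_inv, h1]), 𝒢.src_inv]

private lemma clt_tgt_be (u A v : G) (h1 : 𝒢.src u = 𝒢.src A) (h2 : 𝒢.tgt A = 𝒢.src v) :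
    𝒢.tgt (𝒢.mul (𝒢.mul (𝒢.inv u) A) v) = 𝒢.tgt v := by
  rw [𝒢.tgt_mul _ _ (by rw [𝒢.tgt_mul _ _ (by rw [𝒢.tgt_inv, h1]), h2])]

private lemma clt_sec_congr {ι : Type w} {U : ι → Set X} (s : ∀ i, ∀ x ∈ U i, X → G)
    {i : ι} {x₁ x₂ : X} (hx : x₁ = x₂) (h₁ : x₁ ∈ U i) (h₂ : x₂ ∈ U i) (y : X) :
    s i x₁ h₁ y = s i x₂ h₂ y := by subst hx; rfl


private lemma clt_image_eq {G : Type u} {X : Type v} {ι : Type w} (𝒢 : GroupoidOn G X)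
    {U : ι → Set X} (s : ∀ i, ∀ x ∈ U i, X → G)
    (hst : ∀ i x (hx : x ∈ U i), ∀ y ∈ U i, 𝒢.tgt (s i x hx y) = y)
    (hss : ∀ i x (hx : x ∈ U i), ∀ y ∈ U i, 𝒢.src (s i x hx y) = x)
    (a b : G) (hab : 𝒢.src a = 𝒢.src b) (i j k : ι)
    (hxi : 𝒢.src a ∈ U i) (hyj : 𝒢.tgt a ∈ U j) (hzk : 𝒢.tgt b ∈ U k) :
    (fun p : G × G => 𝒢.mul (𝒢.inv p.1) p.2) ''
        ((basicSet 𝒢 s i j hxi hyj a ×ˢ basicSet 𝒢 s i k hxi hzk b) ∩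
          {p : G × G | 𝒢.src p.1 = 𝒢.src p.2}) =
      basicSet 𝒢 s j k hyj hzk (𝒢.mul (𝒢.inv a) b) := by
  ext g
  constructor
  · rintro ⟨⟨p₁, p₂⟩, ⟨⟨hp₁, hp₂⟩, hP⟩, rfl⟩
    obtain ⟨z₁, hz₁, w₁, hw₁, rfl⟩ := hp₁
    obtain ⟨z₂, hz₂, w₂, hw₂, rfl⟩ := hp₂
    have h₁ : 𝒢.src (s i (𝒢.src a) hxi z₁) = 𝒢.src a := hss i _ hxi z₁ hz₁
    have h₂ : 𝒢.src (s i (𝒢.src a) hxi z₂) = 𝒢.src b := (hss i _ hxi z₂ hz₂).trans hab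
    have hv₁ : 𝒢.tgt a = 𝒢.src (s j (𝒢.tgt a) hyj w₁) := (hss j _ hyj w₁ hw₁).symm
    have hv₂ : 𝒢.tgt b = 𝒢.src (s k (𝒢.tgt b) hzk w₂) := (hss k _ hzk w₂ hw₂).symm
    have hz : z₁ = z₂ := by
      have e1 := (clt_src_be 𝒢 _ _ _ h₁ hv₁).trans (hst i _ hxi z₁ hz₁)
      have e2 := (clt_src_be 𝒢 _ _ _ h₂ hv₂).trans (hst i _ hxi z₂ hz₂)
      exact e1.symm.trans (hP.trans e2)
    subst hz
    exact ⟨w₁, hw₁, w₂, hw₂, clt_delta_calc 𝒢 _ a _ b _ h₁ hv₁ h₂ hv₂⟩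
  · rintro ⟨w₁, hw₁, w₂, hw₂, rfl⟩
    have hu₁ : 𝒢.src (s i (𝒢.src a) hxi (𝒢.src a)) = 𝒢.src a := hss i _ hxi _ hxi
    have hv₁ : 𝒢.tgt a = 𝒢.src (s j (𝒢.tgt a) hyj w₁) := (hss j _ hyj w₁ hw₁).symm
    have hv₂ : 𝒢.tgt b = 𝒢.src (s k (𝒢.tgt b) hzk w₂) := (hss k _ hzk w₂ hw₂).symm
    refine ⟨(𝒢.mul (𝒢.mul (𝒢.inv (s i (𝒢.src a) hxi (𝒢.src a))) a) (s j (𝒢.tgt a) hyj w₁),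
            𝒢.mul (𝒢.mul (𝒢.inv (s i (𝒢.src a) hxi (𝒢.src a))) b) (s k (𝒢.tgt b) hzk w₂)),
      ⟨⟨⟨_, hxi, w₁, hw₁, rfl⟩, ⟨_, hxi, w₂, hw₂, rfl⟩⟩, ?_⟩, ?_⟩
    · show 𝒢.src _ = 𝒢.src _
      rw [clt_src_be 𝒢 _ _ _ hu₁ hv₁, clt_src_be 𝒢 _ _ _ (hu₁.trans hab) hv₂]
    · exact clt_delta_calc 𝒢 _ _ _ _ _ hu₁ hv₁ (hu₁.trans hab) hv₂

end CLTAux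

/-- For a compatible locally trivial groupoid `G` with the topology
generated by the basic sets, the difference map `δ(a,b) = a⁻¹ b` is continuous; indeed, for
`a ∈ G(x,y)`, `b ∈ G(x,z)`, `δ` maps the basic neighbourhood
`((Ũ_{x,i})⁻¹ a (Ũ_{y,j})) ×_α ((Ũ_{x,i})⁻¹ b (Ũ_{z,k}))` of `(a,b)` onto
`(Ũ_{y,j})⁻¹ a⁻¹ b (Ũ_{z,k})`. -/
theorem compatLocTriv_delta_continuous {G : Type u} {X : Type v} {ι : Type w}
    [TopologicalSpace X] (𝒢 : GroupoidOn G X) (U : ι → Set X) (s : ∀ i, ∀ x ∈ U i, X → G)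
    (h : IsCompatLocTriv 𝒢 U s) :
    DeltaContinuousWith 𝒢 (cltTopology 𝒢 s) ∧
    ∀ (a b : G), 𝒢.src a = 𝒢.src b →
      ∀ (i j k : ι) (hxi : 𝒢.src a ∈ U i) (hyj : 𝒢.tgt a ∈ U j) (hzk : 𝒢.tgt b ∈ U k),
        (fun p : G × G => 𝒢.mul (𝒢.inv p.1) p.2) ''
            ((basicSet 𝒢 s i j hxi hyj a ×ˢ basicSet 𝒢 s i k hxi hzk b) ∩
              {p : G × G | 𝒢.src p.1 = 𝒢.src p.2}) =
          basicSet 𝒢 s j k hyj hzk (𝒢.mul (𝒢.inv a) b) := by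
  refine ⟨?_, fun a b hab i j k hxi hyj hzk =>
    clt_image_eq 𝒢 s h.sec_tgt h.sec_src a b hab i j k hxi hyj hzk⟩
  letI := cltTopology 𝒢 s
  show Continuous fun p : {p : G × G // 𝒢.src p.1 = 𝒢.src p.2} => 𝒢.mul (𝒢.inv p.1.1) p.1.2
  refine continuous_generateFrom_iff.mpr ?_
  rintro B ⟨c, j', k', h1, h2, rfl⟩
  rw [isOpen_iff_forall_mem_open]
  rintro ⟨⟨a, b⟩, hab⟩ hmem
  obtain ⟨w₀, hw₀, w₀', hw₀', hmeq⟩ := hmem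
  replace hab : 𝒢.src a = 𝒢.src b := hab
  replace hmeq : 𝒢.mul (𝒢.inv a) b =
    𝒢.mul (𝒢.mul (𝒢.inv (s j' (𝒢.src c) h1 w₀)) c) (s k' (𝒢.tgt c) h2 w₀') := hmeq
  obtain ⟨i, hxi⟩ := h.covers (𝒢.src a)
  set t : G := s j' (𝒢.src c) h1 w₀ with htdef
  set t' : G := s k' (𝒢.tgt c) h2 w₀' with ht'def
  have hts : 𝒢.src t = 𝒢.src c := h.sec_src j' _ h1 w₀ hw₀
  have htt : 𝒢.tgt t = w₀ := h.sec_tgt j' _ h1 w₀ hw₀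
  have ht's : 𝒢.src t' = 𝒢.tgt c := h.sec_src k' _ h2 w₀' hw₀'
  have ht't : 𝒢.tgt t' = w₀' := h.sec_tgt k' _ h2 w₀' hw₀'
  have hta : 𝒢.tgt a = w₀ := by
    have L : 𝒢.src (𝒢.mul (𝒢.inv a) b) = 𝒢.tgt a := by
      rw [𝒢.src_mul _ _ (by rw [𝒢.tgt_inv, hab]), 𝒢.src_inv]
    have R : 𝒢.src (𝒢.mul (𝒢.mul (𝒢.inv t) c) t') = w₀ :=
      (clt_src_be 𝒢 t c t' hts ht's.symm).trans htt
    rw [← L, hmeq, R]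
  have htb : 𝒢.tgt b = w₀' := by
    have L : 𝒢.tgt (𝒢.mul (𝒢.inv a) b) = 𝒢.tgt b := 𝒢.tgt_mul _ _ (by rw [𝒢.tgt_inv, hab])
    have R : 𝒢.tgt (𝒢.mul (𝒢.mul (𝒢.inv t) c) t') = w₀' :=
      (clt_tgt_be 𝒢 t c t' hts ht's.symm).trans ht't
    rw [← L, hmeq, R]
  set a' : G := 𝒢.mul a (𝒢.inv t) with ha'def
  set b' : G := 𝒢.mul b (𝒢.inv t') with hb'def
  have ha's : 𝒢.src a' = 𝒢.src a := 𝒢.src_mul _ _ (by rw [𝒢.src_inv, htt, hta])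
  have ha't : 𝒢.tgt a' = 𝒢.src c := by
    rw [ha'def, 𝒢.tgt_mul _ _ (by rw [𝒢.src_inv, htt, hta]), 𝒢.tgt_inv, hts]
  have hb's : 𝒢.src b' = 𝒢.src b := 𝒢.src_mul _ _ (by rw [𝒢.src_inv, ht't, htb])
  have hb't : 𝒢.tgt b' = 𝒢.tgt c := by
    rw [hb'def, 𝒢.tgt_mul _ _ (by rw [𝒢.src_inv, ht't, htb]), 𝒢.tgt_inv, ht's]
  have ha'i : 𝒢.src a' ∈ U i := by rw [ha's]; exact hxi
  have ha'j : 𝒢.tgt a' ∈ U j' := by rw [ha't]; exact h1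
  have hb'i : 𝒢.src b' ∈ U i := by rw [hb's, ← hab]; exact hxi
  have hb'k : 𝒢.tgt b' ∈ U k' := by rw [hb't]; exact h2
  have hab' : 𝒢.src a' = 𝒢.src b' := by rw [ha's, hb's, hab]
  have hc : 𝒢.mul (𝒢.inv a') b' = c := by
    rw [ha'def, hb'def, clt_inv_mul_rev 𝒢 a (𝒢.inv t) (by rw [𝒢.src_inv, htt, hta]),
      clt_inv_inv,
      𝒢.mul_assoc t (𝒢.inv a) _ (by rw [𝒢.src_inv, htt, hta])
        (by rw [𝒢.tgt_inv, 𝒢.src_mul _ _ (by rw [𝒢.src_inv, ht't, htb]), hab]),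
      ← 𝒢.mul_assoc (𝒢.inv a) b (𝒢.inv t') (by rw [𝒢.tgt_inv, hab])
        (by rw [𝒢.src_inv, ht't, htb]),
      hmeq,
      clt_mul_mul_inv 𝒢 (𝒢.mul (𝒢.inv t) c) t'
        (by rw [𝒢.tgt_mul _ _ (by rw [𝒢.tgt_inv, hts]), ht's]),
      clt_mul_inv_cancel_left 𝒢 t c hts]
  refine ⟨Subtype.val ⁻¹' (basicSet 𝒢 s i j' ha'i ha'j a' ×ˢ basicSet 𝒢 s i k' hb'i hb'k b'),
    ?_, ?_, ?_, ?_⟩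
  · rintro ⟨⟨p₁, p₂⟩, hq⟩ ⟨hp₁, hp₂⟩
    obtain ⟨z₁, hz₁, w₁, hw₁, rfl⟩ := hp₁
    obtain ⟨z₂, hz₂, w₂, hw₂, rfl⟩ := hp₂
    have hu₁s : 𝒢.src (s i (𝒢.src a') ha'i z₁) = 𝒢.src a' := h.sec_src i _ ha'i z₁ hz₁
    have hu₂s : 𝒢.src (s i (𝒢.src b') hb'i z₂) = 𝒢.src b' := h.sec_src i _ hb'i z₂ hz₂
    have huv₁ : 𝒢.tgt a' = 𝒢.src (s j' (𝒢.tgt a') ha'j w₁) := (h.sec_src j' _ ha'j w₁ hw₁).symm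
    have huv₂ : 𝒢.tgt b' = 𝒢.src (s k' (𝒢.tgt b') hb'k w₂) := (h.sec_src k' _ hb'k w₂ hw₂).symm
    have hz12 : z₁ = z₂ := by
      have e1 := (clt_src_be 𝒢 _ _ _ hu₁s huv₁).trans (h.sec_tgt i _ ha'i z₁ hz₁)
      have e2 := (clt_src_be 𝒢 _ _ _ hu₂s huv₂).trans (h.sec_tgt i _ hb'i z₂ hz₂)
      exact e1.symm.trans (hq.trans e2)
    subst hz12
    have huu : s i (𝒢.src b') hb'i z₁ = s i (𝒢.src a') ha'i z₁ :=
      clt_sec_congr s hab'.symm hb'i ha'i z₁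
    show 𝒢.mul (𝒢.inv (𝒢.mul (𝒢.mul (𝒢.inv (s i (𝒢.src a') ha'i z₁)) a')
        (s j' (𝒢.tgt a') ha'j w₁)))
      (𝒢.mul (𝒢.mul (𝒢.inv (s i (𝒢.src b') hb'i z₁)) b') (s k' (𝒢.tgt b') hb'k w₂)) ∈
      basicSet 𝒢 s j' k' h1 h2 c
    rw [huu]
    refine ⟨w₁, hw₁, w₂, hw₂, ?_⟩
    rw [clt_delta_calc 𝒢 (s i (𝒢.src a') ha'i z₁) a' (s j' (𝒢.tgt a') ha'j w₁) b'
        (s k' (𝒢.tgt b') hb'k w₂) hu₁s huv₁ (hu₁s.trans hab') huv₂,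
      hc, clt_sec_congr s ha't ha'j h1 w₁, clt_sec_congr s hb't hb'k h2 w₂]
  · have o1 : IsOpen (basicSet 𝒢 s i j' ha'i ha'j a') :=
      TopologicalSpace.isOpen_generateFrom_of_mem ⟨a', i, j', ha'i, ha'j, rfl⟩
    have o2 : IsOpen (basicSet 𝒢 s i k' hb'i hb'k b') :=
      TopologicalSpace.isOpen_generateFrom_of_mem ⟨b', i, k', hb'i, hb'k, rfl⟩
    exact IsOpen.preimage continuous_subtype_val (o1.prod o2)
  · refine ⟨𝒢.src a', ha'i, w₀, hw₀, ?_⟩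
    rw [h.sec_id i _ ha'i, clt_inv_e, 𝒢.e_mul, clt_sec_congr s ha't ha'j h1 w₀]
    exact (clt_mul_inv_mul 𝒢 a t (hta.trans htt.symm)).symm
  · refine ⟨𝒢.src b', hb'i, w₀', hw₀', ?_⟩
    rw [h.sec_id i _ hb'i, clt_inv_e, 𝒢.e_mul, clt_sec_congr s hb't hb'k h2 w₀']
    exact (clt_mul_inv_mul 𝒢 b t' (htb.trans ht't.symm)).symm
end

section
/- Let X be a locally path connected and semilocally 1-connected topological space. Then the fundamental groupoid π₁X is a compatible locally trivial groupoid on X: the cover 𝒰 consisting of all open, path connected subsets U of X such that any two paths in U with the same endpoints are homotopic in X is an open cover of X which is a base for its topology, and the local sections s_{x,i} : U_i → (π₁X)_x defined by sending y ∈ U_i to the homotopy class of a path in U_i from x to y are well defined sections of β satisfying the compatibility condition. -/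
universe u v w u₁ v₁ u₂ v₂

open CategoryTheory

/-- The morphisms of the fundamental groupoid `π₁ Z`, bundled into a single set:
homotopy classes rel endpoints of paths in `Z`, together with their endpoints. -/
def piMor (Z : Type u) [TopologicalSpace Z] : Type u :=
  Σ x y : FundamentalGroupoid Z, x ⟶ y

lemma FundamentalGroupoid.ext' {Z : Type u} {p q : FundamentalGroupoid Z}
    (h : p.as = q.as) : p = q := by
  cases p; cases q; cases h; rfl

attribute [local instance] Classical.propDecidable

/-- The fundamental groupoid `π₁ Z` of a topological space `Z`, as a groupoid on `Z`:
composition is concatenation of (homotopy classes of) paths. -/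
noncomputable def piGroupoid (Z : Type u) [TopologicalSpace Z] :
    GroupoidOn (piMor Z) Z where
  src a := a.1.as
  tgt a := a.2.1.as
  e x := ⟨⟨x⟩, ⟨x⟩, 𝟙 (⟨x⟩ : FundamentalGroupoid Z)⟩
  mul a b := if h : a.2.1 = b.1 then ⟨a.1, b.2.1, a.2.2 ≫ eqToHom h ≫ b.2.2⟩ else a
  inv a := ⟨a.2.1, a.1, Groupoid.inv a.2.2⟩
  src_e x := rfl
  tgt_e x := rfl
  src_mul a b h := by unfold piMor at *; rw [dif_pos (FundamentalGroupoid.ext' h)]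
  tgt_mul a b h := by unfold piMor at *; rw [dif_pos (FundamentalGroupoid.ext' h)]
  mul_assoc := by
    unfold piMor at *
    rintro ⟨ax, ay, f⟩ ⟨bx, by', g⟩ ⟨cx, cy, k⟩ h1 h2
    obtain rfl : ay = bx := FundamentalGroupoid.ext' h1
    obtain rfl : by' = cx := FundamentalGroupoid.ext' h2
    dsimp only
    rw [dif_pos rfl, dif_pos rfl, dif_pos rfl, dif_pos rfl]
    simp
  e_mul := by
    unfold piMor at *
    rintro ⟨⟨x⟩, ay, f⟩
    dsimp only
    rw [dif_pos rfl]
    simp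
  mul_e := by
    unfold piMor at *
    rintro ⟨ax, ⟨y⟩, f⟩
    dsimp only
    rw [dif_pos rfl]
    simp
  src_inv a := rfl
  tgt_inv a := rfl
  mul_inv := by
    unfold piMor at *
    rintro ⟨⟨x⟩, ay, f⟩
    dsimp only
    rw [dif_pos rfl]
    simp
  inv_mul := by
    unfold piMor at *
    rintro ⟨ax, ⟨y⟩, f⟩
    dsimp only
    rw [dif_pos rfl]
    simp

/-- The homotopy class of a path, as a morphism of the fundamental groupoid. -/
def pathClass {Z : Type u} [TopologicalSpace Z] {x y : Z} (γ : Path x y) :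
    (⟨x⟩ : FundamentalGroupoid Z) ⟶ ⟨y⟩ :=
  Quotient.mk (Path.Homotopic.setoid x y) γ

/-! Semilocal simple connectivity makes loops in small open sets null-homotopic in `Z`, so any
two paths in such a set with the same endpoints are homotopic in `Z`; by local path
connectedness the path components of these sets form a base. On a member `U` of this base the
homotopy class of a path in `U` from `x` to `y` is therefore unique, which makes the local
sections well defined, sends `x` to the identity, and makes two sections about `x` agree on the
path component of `x` in the intersection of their domains. -/

section RelSimplyConnected

variable {Z : Type u} [TopologicalSpace Z]

theorem Path.Homotopic.of_trans_symm {x y : Z} {γ₁ γ₂ : Path x y}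
    (h : (γ₁.trans γ₂.symm).Homotopic (Path.refl x)) : γ₁.Homotopic γ₂ := by
  rw [← Path.Homotopic.Quotient.eq] at h ⊢
  rw [Path.Homotopic.Quotient.mk_trans, Path.Homotopic.Quotient.mk_symm] at h
  calc Path.Homotopic.Quotient.mk γ₁
      = ((Path.Homotopic.Quotient.mk γ₁).trans (Path.Homotopic.Quotient.mk γ₂).symm).trans
          (Path.Homotopic.Quotient.mk γ₂) := by
        rw [Path.Homotopic.Quotient.trans_assoc, Path.Homotopic.Quotient.symm_trans,
          Path.Homotopic.Quotient.trans_refl]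
    _ = Path.Homotopic.Quotient.mk γ₂ := by
        rw [h, Path.Homotopic.Quotient.mk_refl, Path.Homotopic.Quotient.refl_trans]

def IsRelSimplyConnected (V : Set Z) : Prop :=
  ∀ (x y : Z) (γ₁ γ₂ : Path x y), Set.range γ₁ ⊆ V → Set.range γ₂ ⊆ V → γ₁.Homotopic γ₂

theorem IsRelSimplyConnected.mono {V W : Set Z} (hW : IsRelSimplyConnected W) (h : V ⊆ W) :
    IsRelSimplyConnected V :=
  fun x y γ₁ γ₂ h₁ h₂ => hW x y γ₁ γ₂ (h₁.trans h) (h₂.trans h)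

theorem isRelSimplyConnected_of_loops {V : Set Z}
    (h : ∀ (y : Z) (γ : Path y y), Set.range γ ⊆ V → γ.Homotopic (Path.refl y)) :
    IsRelSimplyConnected V := by
  intro x y γ₁ γ₂ h₁ h₂
  refine Path.Homotopic.of_trans_symm (h x _ ?_)
  rw [Path.trans_range, Path.symm_range]
  exact Set.union_subset h₁ h₂

variable (Z) in
def relSimplyConnectedCover : Set (Set Z) :=
  {V | IsOpen V ∧ IsPathConnected V ∧ IsRelSimplyConnected V}

theorem pathComponentIn_mem_relSimplyConnectedCover [LocallyPathConnectedSpace Z] {V : Set Z}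
    (hVo : IsOpen V) (hV : IsRelSimplyConnected V) {x : Z} (hx : x ∈ V) :
    pathComponentIn V x ∈ relSimplyConnectedCover Z :=
  ⟨hVo.pathComponentIn x, isPathConnected_pathComponentIn hx, hV.mono pathComponentIn_subset⟩

theorem isTopologicalBasis_relSimplyConnectedCover [LocallyPathConnectedSpace Z]
    (hslc : ∀ z : Z, ∃ V : Set Z, IsOpen V ∧ z ∈ V ∧
      ∀ (y : Z) (γ : Path y y), Set.range γ ⊆ V → γ.Homotopic (Path.refl y)) :
    TopologicalSpace.IsTopologicalBasis (relSimplyConnectedCover Z) := by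
  refine TopologicalSpace.isTopologicalBasis_of_isOpen_of_nhds (fun V hV => hV.1) ?_
  intro z u hz hu
  obtain ⟨V, hVo, hzV, hV⟩ := hslc z
  have hzuV : z ∈ u ∩ V := ⟨hz, hzV⟩
  exact ⟨pathComponentIn (u ∩ V) z,
    pathComponentIn_mem_relSimplyConnectedCover (hu.inter hVo)
      ((isRelSimplyConnected_of_loops hV).mono Set.inter_subset_right) hzuV,
    mem_pathComponentIn_self hzuV, pathComponentIn_subset.trans Set.inter_subset_left⟩

end RelSimplyConnected

section LocalSection

variable {Z : Type u} [TopologicalSpace Z]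

noncomputable def localSection (V : Set Z) (x y : Z) : piMor Z :=
  if h : JoinedIn V x y then ⟨⟨x⟩, ⟨y⟩, pathClass h.somePath⟩ else (piGroupoid Z).e y

theorem localSection_of_joinedIn {V : Set Z} {x y : Z} (h : JoinedIn V x y) :
    localSection V x y = ⟨⟨x⟩, ⟨y⟩, pathClass h.somePath⟩ :=
  dif_pos h

theorem localSection_mem_hom {V : Set Z} {x y : Z} (h : JoinedIn V x y) :
    localSection V x y ∈ (piGroupoid Z).hom x y := by
  rw [localSection_of_joinedIn h]
  exact ⟨rfl, rfl⟩

theorem localSection_eq {V : Set Z} (hV : IsRelSimplyConnected V) {x y : Z} (γ : Path x y)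
    (hγ : Set.range γ ⊆ V) : localSection V x y = ⟨⟨x⟩, ⟨y⟩, pathClass γ⟩ := by
  have h : JoinedIn V x y := ⟨γ, Set.range_subset_iff.1 hγ⟩
  rw [localSection_of_joinedIn h]
  congr 2
  exact Quotient.sound (hV x y _ γ (Set.range_subset_iff.2 h.somePath_mem) hγ)

theorem exists_localSection_eq {V : Set Z} {x y : Z} (h : JoinedIn V x y) :
    ∃ γ : Path x y, Set.range γ ⊆ V ∧ localSection V x y = ⟨⟨x⟩, ⟨y⟩, pathClass γ⟩ :=
  ⟨h.somePath, Set.range_subset_iff.2 h.somePath_mem, localSection_of_joinedIn h⟩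

theorem localSection_self {V : Set Z} (hV : IsRelSimplyConnected V) {x : Z} (hx : x ∈ V) :
    localSection V x x = (piGroupoid Z).e x :=
  localSection_eq hV (Path.refl x) (by rwa [Path.refl_range, Set.singleton_subset_iff])

theorem eqOn_localSection_pathComponentIn {V W : Set Z} (hV : IsRelSimplyConnected V)
    (hW : IsRelSimplyConnected W) (x : Z) :
    Set.EqOn (localSection V x) (localSection W x) (pathComponentIn (V ∩ W) x) := by
  rintro y ⟨γ, hγ⟩
  have hγ' : Set.range γ ⊆ V ∩ W := Set.range_subset_iff.2 hγ
  rw [localSection_eq hV γ (hγ'.trans Set.inter_subset_left),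
    localSection_eq hW γ (hγ'.trans Set.inter_subset_right)]

end LocalSection

/-- Let `Z` be a locally path connected and semilocally 1-connected
topological space.  Then the fundamental groupoid `π₁ Z` is a compatible locally trivial
groupoid on `Z`: the cover consisting of all open, path connected subsets `V` of `Z` such
that any two paths in `V` with the same endpoints are homotopic in `Z` is an open cover of
`Z` which is a base for its topology, and the local sections, sending `y ∈ U i` to the
homotopy class of a path in `U i` from `x` to `y`, are well-defined sections of `β`
satisfying the compatibility condition. -/
theorem fundamentalGroupoid_compatLocTriv (Z : Type u) [TopologicalSpace Z]
    [LocallyPathConnectedSpace Z]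
    (hslc : ∀ z : Z, ∃ V : Set Z, IsOpen V ∧ z ∈ V ∧
      ∀ (y : Z) (γ : Path y y), Set.range γ ⊆ V → γ.Homotopic (Path.refl y)) :
    ∃ (ι : Type u) (U : ι → Set Z) (s : ∀ i, ∀ x ∈ U i, Z → piMor Z),
      Set.range U = {V : Set Z | IsOpen V ∧ IsPathConnected V ∧
        ∀ (x y : Z) (γ₁ γ₂ : Path x y),
          Set.range γ₁ ⊆ V → Set.range γ₂ ⊆ V → γ₁.Homotopic γ₂} ∧
      IsCompatLocTriv (piGroupoid Z) U s ∧
      ∀ i x (hx : x ∈ U i), ∀ y ∈ U i, ∃ γ : Path x y, Set.range γ ⊆ U i ∧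
        s i x hx y = ⟨⟨x⟩, ⟨y⟩, pathClass γ⟩ := by
  have hB := isTopologicalBasis_relSimplyConnectedCover hslc
  refine ⟨relSimplyConnectedCover Z, Subtype.val, fun V x _ => localSection V x, Subtype.range_coe,
    ?_, fun V x hx y hy => exists_localSection_eq (V.2.2.1.joinedIn x hx y hy)⟩
  refine
    { isOpen := fun V => V.2.1
      covers := fun x => ?_
      isBasis := by rwa [Subtype.range_coe]
      sec_tgt := fun V x hx y hy => (localSection_mem_hom (V.2.2.1.joinedIn x hx y hy)).2
      sec_src := fun V x hx y hy => (localSection_mem_hom (V.2.2.1.joinedIn x hx y hy)).1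
      sec_id := fun V x hx => localSection_self V.2.2.2 hx
      compat := fun x V W hxV hxW => ?_ }
  · obtain ⟨V, hV, hxV, -⟩ := hB.exists_subset_of_mem_open (Set.mem_univ x) isOpen_univ
    exact ⟨⟨V, hV⟩, hxV⟩
  · have hxVW : x ∈ (V ∩ W : Set Z) := ⟨hxV, hxW⟩
    exact ⟨⟨_, pathComponentIn_mem_relSimplyConnectedCover (V.2.1.inter W.2.1)
        (V.2.2.2.mono Set.inter_subset_left) hxVW⟩, mem_pathComponentIn_self hxVW,
      pathComponentIn_subset, eqOn_localSection_pathComponentIn V.2.2.2 W.2.2.2 x⟩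
end

section
/- Let G be a topological groupoid whose underlying groupoid is compatible locally trivial and let W be an open subset of G such that O_G ⊆ W. Suppose that each local section s_{x,i} : U_i → G_x has image contained in W. Then the monodromy groupoid M(G,W) is compatible locally trivial (with object space X and the local sections obtained by composing the s_{x,i} with the injection ĩ : W → M(G,W)). -/
universe u v w u₁ v₁ u₂ v₂

/-- If `G` is a topological groupoid whose underlying groupoid is
compatible locally trivial, `W` is an open subset of `G` containing the identities, and
every local section `s i x hx : U i → G_x` has image contained in `W`, then the monodromy
groupoid `M(G,W)` is compatible locally trivial, with the same cover and the local sections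
obtained by composing the `s i x hx` with the canonical injection `ι : W → M(G,W)`. -/
theorem monodromy_compatLocTriv {G : Type u} {X : Type v} {M : Type u₁} {ι : Type w}
    [TopologicalSpace G] [TopologicalSpace X]
    (𝒢 : GroupoidOn G X) (htop : IsTopGroupoid 𝒢)
    (U : ι → Set X) (s : ∀ i, ∀ x ∈ U i, X → G) (hclt : IsCompatLocTriv 𝒢 U s)
    (W : Set G) (hWopen : IsOpen W) (hWe : ∀ x, 𝒢.e x ∈ W)
    (hsW : ∀ i x (hx : x ∈ U i), ∀ y ∈ U i, s i x hx y ∈ W)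
    (𝓜 : GroupoidOn M X) (ιm : G → M) (hmon : IsMonodromy 𝒢 W 𝓜 ιm) :
    IsCompatLocTriv 𝓜 U (fun i x hx y => ιm (s i x hx y)) := by
  refine ⟨hclt.isOpen, hclt.covers, hclt.isBasis, ?_, ?_, ?_, ?_⟩
  · intro i x hx y hy
    rw [hmon.pre.tgt _ (hsW i x hx y hy), hclt.sec_tgt i x hx y hy]; rfl
  · intro i x hx y hy
    rw [hmon.pre.src _ (hsW i x hx y hy), hclt.sec_src i x hx y hy]; rfl
  · intro i x hx
    rw [hclt.sec_id i x hx, hmon.pre.e]; rfl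
  · intro x i j hxi hxj
    obtain ⟨k, hxk, hsub, heq⟩ := hclt.compat x i j hxi hxj
    exact ⟨k, hxk, hsub, fun y hy => by rw [heq y hy]⟩
end
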